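/- arXiv:0808.1550 — 2 statements merged into one kernel-verified Lean document; each statement's English description precedes it below -/
import Mathlib

section
/- Every Markov triple is obtained from (1,1,1) by a finite sequence of mutations (each mutation replaces one coordinate x of the triple by 3yz − x, where y, z are the other two coordinates). -/
/-- One mutation step on a (Markov) triple: replace one coordinate `x` by
`3yz − x`, where `y, z` are the other two coordinates. -/
def MarkovMutation : ℤ × ℤ × ℤ → ℤ × ℤ × ℤ → Prop := fun p q =>
  q = (3 * p.2.1 * p.2.2 - p.1, p.2.1, p.2.2) ∨
  q = (p.1, 3 * p.1 * p.2.2 - p.2.1, p.2.2) ∨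
  q = (p.1, p.2.1, 3 * p.1 * p.2.1 - p.2.2)

/-- Descent on the largest coordinate: strict decrease (ordered version). -/
lemma markov_lt (a b c : ℤ) (ha : 0 < a) (hb : 0 < b) (hc : 0 < c)
    (hcb : c ≤ b) (hba : b ≤ a)
    (h : a ^ 2 + b ^ 2 + c ^ 2 = 3 * a * b * c)
    (hne : ¬(a = 1 ∧ b = 1 ∧ c = 1)) :
    3 * b * c - a < a := by
  by_cases hb1 : b = 1
  · have hc1 : c = 1 := le_antisymm (hb1 ▸ hcb) hc
    subst hb1; subst hc1
    have hfac : (a - 1) * (a - 2) = 0 := by linear_combination h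
    rcases mul_eq_zero.mp hfac with h1 | h2
    · exfalso; exact hne ⟨by linarith, rfl, rfl⟩
    · have : a = 2 := by linarith
      subst this; norm_num
  · have hb2 : 2 ≤ b := by omega
    have hid : (b - a) * (b - (3 * b * c - a)) = 2 * b ^ 2 + c ^ 2 - 3 * b ^ 2 * c := by
      linear_combination -h
    nlinarith [mul_nonneg (sub_nonneg.2 hcb) (show (0:ℤ) ≤ b + c - 3 by linarith),
      mul_nonneg (mul_nonneg (show (0:ℤ) ≤ b - 2 by linarith) (show (0:ℤ) ≤ b + 2 by linarith))
        (show (0:ℤ) ≤ c - 1 by linarith),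
      sq_nonneg (a - b), mul_nonneg (sub_nonneg.2 hba) (sub_nonneg.2 hba)]

/-- Descent on the largest coordinate. -/
lemma markov_descent (a b c : ℤ) (ha : 0 < a) (hb : 0 < b) (hc : 0 < c)
    (hba : b ≤ a) (hca : c ≤ a)
    (h : a ^ 2 + b ^ 2 + c ^ 2 = 3 * a * b * c)
    (hne : ¬(a = 1 ∧ b = 1 ∧ c = 1)) :
    0 < 3 * b * c - a ∧ 3 * b * c - a < a := by
  constructor
  · nlinarith [mul_pos hb hb, mul_pos hc hc, mul_pos hb hc]
  · rcases le_total c b with hcb | hbc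
    · exact markov_lt a b c ha hb hc hcb hba h hne
    · have := markov_lt a c b ha hc hb hbc hca
        (by linarith [h]; ) (by tauto)
      linarith [this]

lemma markov_aux : ∀ n : ℕ, ∀ a b c : ℤ, 0 < a → 0 < b → 0 < c →
    a + b + c ≤ (n : ℤ) →
    a ^ 2 + b ^ 2 + c ^ 2 = 3 * a * b * c →
    Relation.ReflTransGen MarkovMutation (1, 1, 1) (a, b, c) := by
  intro n
  induction n with
  | zero => intro a b c ha hb hc hsum _; exfalso; simp at hsum; linarith
  | succ n ih =>
    intro a b c ha hb hc hsum h
    by_cases htriv : a = 1 ∧ b = 1 ∧ c = 1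
    · obtain ⟨h1, h2, h3⟩ := htriv; subst h1; subst h2; subst h3
      exact Relation.ReflTransGen.refl
    · have hsum' : a + b + c ≤ (n : ℤ) + 1 := by push_cast at hsum ⊢; linarith
      rcases le_total a b with h1 | h1 <;> rcases le_total a c with h2 | h2 <;>
        rcases le_total b c with h3 | h3
      · -- c is max
        obtain ⟨hp, hl⟩ := markov_descent c a b hc ha hb h2 h3
          (by linarith [h]) (by tauto)
        have heq : a ^ 2 + b ^ 2 + (3 * a * b - c) ^ 2 = 3 * a * b * (3 * a * b - c) := by
          linear_combination h
        have hstep := ih a b (3 * a * b - c) ha hb hp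
          (by have : a + b + (3 * a * b - c) < (n : ℤ) + 1 := by linarith
              exact Int.lt_add_one_iff.mp this) heq
        exact hstep.tail (Or.inr (Or.inr (by simp [Prod.ext_iff])))
      · -- b is max
        obtain ⟨hp, hl⟩ := markov_descent b a c hb ha hc h1 h3
          (by linarith [h]) (by tauto)
        have heq : a ^ 2 + (3 * a * c - b) ^ 2 + c ^ 2 = 3 * a * (3 * a * c - b) * c := by
          linear_combination h
        have hstep := ih a (3 * a * c - b) c ha hp hc
          (by have : a + (3 * a * c - b) + c < (n : ℤ) + 1 := by linarith
              exact Int.lt_add_one_iff.mp this) heq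
        exact hstep.tail (Or.inr (Or.inl (by simp [Prod.ext_iff])))
      · -- b ≤ c ≤ a together with a ≤ b: all equal-ish; c ≤ a and b ≤ a
        obtain ⟨hp, hl⟩ := markov_descent a b c ha hb hc (by linarith) h2 h htriv
        have heq : (3 * b * c - a) ^ 2 + b ^ 2 + c ^ 2 = 3 * (3 * b * c - a) * b * c := by
          linear_combination h
        have hstep := ih (3 * b * c - a) b c hp hb hc
          (by have : (3 * b * c - a) + b + c < (n : ℤ) + 1 := by linarith
              exact Int.lt_add_one_iff.mp this) heq
        exact hstep.tail (Or.inl (by simp [Prod.ext_iff]))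
      ·
        obtain ⟨hp, hl⟩ := markov_descent b a c hb ha hc h1 h3
          (by linarith [h]) (by tauto)
        have heq : a ^ 2 + (3 * a * c - b) ^ 2 + c ^ 2 = 3 * a * (3 * a * c - b) * c := by
          linear_combination h
        have hstep := ih a (3 * a * c - b) c ha hp hc
          (by have : a + (3 * a * c - b) + c < (n : ℤ) + 1 := by linarith
              exact Int.lt_add_one_iff.mp this) heq
        exact hstep.tail (Or.inr (Or.inl (by simp [Prod.ext_iff])))
      · -- b ≤ a, a ≤ c, b ≤ c: c max
        obtain ⟨hp, hl⟩ := markov_descent c a b hc ha hb h2 h3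
          (by linarith [h]) (by tauto)
        have heq : a ^ 2 + b ^ 2 + (3 * a * b - c) ^ 2 = 3 * a * b * (3 * a * b - c) := by
          linear_combination h
        have hstep := ih a b (3 * a * b - c) ha hb hp
          (by have : a + b + (3 * a * b - c) < (n : ℤ) + 1 := by linarith
              exact Int.lt_add_one_iff.mp this) heq
        exact hstep.tail (Or.inr (Or.inr (by simp [Prod.ext_iff])))
      · -- b ≤ a, a ≤ c, c ≤ b: all comparable, c max (a ≤ c, b ≤ c via c ≤ b means b = c...)
        obtain ⟨hp, hl⟩ := markov_descent c a b hc ha hb h2 (by linarith)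
          (by linarith [h]) (by tauto)
        have heq : a ^ 2 + b ^ 2 + (3 * a * b - c) ^ 2 = 3 * a * b * (3 * a * b - c) := by
          linear_combination h
        have hstep := ih a b (3 * a * b - c) ha hb hp
          (by have : a + b + (3 * a * b - c) < (n : ℤ) + 1 := by linarith
              exact Int.lt_add_one_iff.mp this) heq
        exact hstep.tail (Or.inr (Or.inr (by simp [Prod.ext_iff])))
      · -- b ≤ a, c ≤ a, b ≤ c: a max
        obtain ⟨hp, hl⟩ := markov_descent a b c ha hb hc h1 h2 h htriv
        have heq : (3 * b * c - a) ^ 2 + b ^ 2 + c ^ 2 = 3 * (3 * b * c - a) * b * c := by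
          linear_combination h
        have hstep := ih (3 * b * c - a) b c hp hb hc
          (by have : (3 * b * c - a) + b + c < (n : ℤ) + 1 := by linarith
              exact Int.lt_add_one_iff.mp this) heq
        exact hstep.tail (Or.inl (by simp [Prod.ext_iff]))
      · -- a max
        obtain ⟨hp, hl⟩ := markov_descent a b c ha hb hc h1 h2 h htriv
        have heq : (3 * b * c - a) ^ 2 + b ^ 2 + c ^ 2 = 3 * (3 * b * c - a) * b * c := by
          linear_combination h
        have hstep := ih (3 * b * c - a) b c hp hb hc
          (by have : (3 * b * c - a) + b + c < (n : ℤ) + 1 := by linarith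
              exact Int.lt_add_one_iff.mp this) heq
        exact hstep.tail (Or.inl (by simp [Prod.ext_iff]))

/-- Every Markov triple is obtained from `(1,1,1)` by a finite sequence of mutations. -/
theorem markov_reachable (a b c : ℤ) (ha : 0 < a) (hb : 0 < b) (hc : 0 < c)
    (h : a ^ 2 + b ^ 2 + c ^ 2 = 3 * a * b * c) :
    Relation.ReflTransGen MarkovMutation (1, 1, 1) (a, b, c) := by
  exact markov_aux (a + b + c).toNat a b c ha hb hc
    (by rw [Int.toNat_of_nonneg (by linarith)]) h
end

section
/- Every T_d-string [b₁,…,b_r] (generated by the inductive rules: [4] and [3,2,…,2,3] with (d−2) twos are T_d-strings for d=1 and d≥2 respectively, and if [b₁,…,b_r] is a T_d-string then so are [b₁+1,b₂,…,b_r,2] and [2,b₁,…,b_r+1]) evaluates, as a Hirzebruch–Jung continued fraction, to a fraction of the form dn²/(dna−1) for some positive integers n, a with gcd(a,n) = 1 and 0 < dna − 1 < dn². -/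
/-- The Hirzebruch–Jung continued fraction `[b₁,…,b_r] = b₁ − 1/(b₂ − 1/(⋯ − 1/b_r))`,
evaluated in `ℚ` (using the convention `1/0 = 0`, so `hj [b] = b`). -/
def hj : List ℕ → ℚ
  | [] => 0
  | b :: l => (b : ℚ) - 1 / hj l

/-- `TString d l` : the list `l` is a `T_d`-string, generated inductively. -/
inductive TString : ℕ → List ℕ → Prop
  | base₁ : TString 1 [4]
  | base (d : ℕ) (hd : 2 ≤ d) : TString d (3 :: (List.replicate (d - 2) 2 ++ [3]))
  | left (d b : ℕ) (l : List ℕ) (h : TString d (b :: l)) :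
      TString d ((b + 1) :: (l ++ [2]))
  | right (d b : ℕ) (l : List ℕ) (h : TString d (l ++ [b])) :
      TString d (2 :: (l ++ [b + 1]))

/-!
Encode `[b₁,…,b_r]` by the transfer matrix `M = S_{b₁} ⋯ S_{b_r}`, `S_b = [[b, -1], [1, 0]]`:
when all `bᵢ ≥ 2`, its first column `(p, q)` satisfies `0 ≤ q < p` and `[b₁,…,b_r] = p / q`.
Since `S_{b+1} = U S_b = S_b L` for unipotent `U`, `L`, the two moves become `M ↦ U M S₂` and
`M ↦ S₂ M L`. Both carry `[[dn², 1 - dn(n-a)], [dna - 1, 1 - da(n-a)]]` to a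
matrix of the same shape, with `(n, a) ↦ (n + a, a)` and `(n, a) ↦ (2n - a, n)` respectively;
these preserve `0 < a < n` and `gcd(a, n) = 1`, and both base strings have `(n, a) = (2, 1)`.
-/

def hjMatrix (b : ℤ) : Matrix (Fin 2) (Fin 2) ℤ := !![b, -1; 1, 0]

def hjProd (l : List ℕ) : Matrix (Fin 2) (Fin 2) ℤ := (l.map fun b : ℕ => hjMatrix b).prod

@[simp]
lemma hjProd_nil : hjProd [] = 1 := rfl

lemma hjProd_cons (b : ℕ) (l : List ℕ) : hjProd (b :: l) = hjMatrix b * hjProd l := rfl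

lemma hjProd_append (l l' : List ℕ) : hjProd (l ++ l') = hjProd l * hjProd l' := by
  simp [hjProd]

lemma hjProd_singleton (b : ℕ) : hjProd [b] = hjMatrix b := by
  simp [hjProd]

lemma hjProd_replicate (k b : ℕ) : hjProd (List.replicate k b) = hjMatrix b ^ k := by
  simp [hjProd, List.map_replicate]

lemma hjProd_cons_zero_zero (b : ℕ) (l : List ℕ) :
    hjProd (b :: l) 0 0 = b * hjProd l 0 0 - hjProd l 1 0 := by
  simp [hjProd_cons, hjMatrix, Matrix.mul_apply, Fin.sum_univ_two, sub_eq_add_neg]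

lemma hjProd_cons_one_zero (b : ℕ) (l : List ℕ) : hjProd (b :: l) 1 0 = hjProd l 0 0 := by
  simp [hjProd_cons, hjMatrix, Matrix.mul_apply, Fin.sum_univ_two]

lemma hjProd_one_zero_mem_Ico {l : List ℕ} (hl : ∀ b ∈ l, 2 ≤ b) :
    hjProd l 1 0 ∈ Set.Ico 0 (hjProd l 0 0) := by
  induction l with
  | nil => simp
  | cons b l ih =>
    obtain ⟨hq, hqp⟩ := ih fun x hx => hl x (List.mem_cons_of_mem b hx)
    have hb : (2 : ℤ) ≤ b := by exact_mod_cast hl b List.mem_cons_self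
    rw [hjProd_cons_zero_zero, hjProd_cons_one_zero, Set.mem_Ico]
    constructor <;> nlinarith

lemma hj_eq_hjProd_div {l : List ℕ} (hl : ∀ b ∈ l, 2 ≤ b) :
    hj l = (hjProd l 0 0 : ℚ) / hjProd l 1 0 := by
  induction l with
  | nil => simp [hj]
  | cons b l ih =>
    have hl' : ∀ x ∈ l, 2 ≤ x := fun x hx => hl x (List.mem_cons_of_mem b hx)
    have hp : (hjProd l 0 0 : ℚ) ≠ 0 := by
      obtain ⟨hq, hqp⟩ := hjProd_one_zero_mem_Ico hl'
      exact_mod_cast (hq.trans_lt hqp).ne'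
    rw [hj, ih hl', one_div_div, hjProd_cons_zero_zero, hjProd_cons_one_zero]
    push_cast
    field_simp

lemma hjMatrix_add_one_eq_unipotent_mul (b : ℤ) :
    hjMatrix (b + 1) = !![1, 1; 0, 1] * hjMatrix b := by
  simp only [hjMatrix, Matrix.mul_fin_two]; ring_nf

lemma hjMatrix_add_one_eq_mul_unipotent (b : ℤ) :
    hjMatrix (b + 1) = hjMatrix b * !![1, 0; -1, 1] := by
  simp only [hjMatrix, Matrix.mul_fin_two]; ring_nf

lemma hjMatrix_two_pow (k : ℕ) : hjMatrix 2 ^ k = !![(k : ℤ) + 1, -k; k, 1 - k] := by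
  induction k with
  | zero => simp [Matrix.one_fin_two]
  | succ k ih => rw [pow_succ, ih, hjMatrix, Matrix.mul_fin_two]; push_cast; ring_nf

lemma hjProd_left_move (b : ℕ) (l : List ℕ) :
    hjProd ((b + 1) :: (l ++ [2])) = !![1, 1; 0, 1] * hjProd (b :: l) * hjMatrix 2 := by
  rw [hjProd_cons, hjProd_append, hjProd_singleton, hjProd_cons, Nat.cast_add_one,
    hjMatrix_add_one_eq_unipotent_mul, Nat.cast_ofNat]
  simp only [Matrix.mul_assoc]

lemma hjProd_right_move (b : ℕ) (l : List ℕ) :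
    hjProd (2 :: (l ++ [b + 1])) = hjMatrix 2 * hjProd (l ++ [b]) * !![1, 0; -1, 1] := by
  rw [hjProd_cons, hjProd_append, hjProd_append, hjProd_singleton, hjProd_singleton,
    Nat.cast_add_one b, hjMatrix_add_one_eq_mul_unipotent, Nat.cast_ofNat]
  simp only [Matrix.mul_assoc]

def tMatrix (d n a : ℤ) : Matrix (Fin 2) (Fin 2) ℤ :=
  !![d * n ^ 2, 1 - d * n * (n - a); d * n * a - 1, 1 - d * a * (n - a)]

lemma tMatrix_left_move (d n a : ℤ) :
    !![1, 1; 0, 1] * tMatrix d n a * hjMatrix 2 = tMatrix d (n + a) a := by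
  simp only [tMatrix, hjMatrix, Matrix.mul_fin_two]; ring_nf

lemma tMatrix_right_move (d n a : ℤ) :
    hjMatrix 2 * tMatrix d n a * !![1, 0; -1, 1] = tMatrix d (2 * n - a) n := by
  simp only [tMatrix, hjMatrix, Matrix.mul_fin_two]; ring_nf

namespace TString

lemma two_le {d : ℕ} {l : List ℕ} (h : TString d l) : ∀ b ∈ l, 2 ≤ b := by
  induction h with
  | base₁ => simp
  | base d hd => intro b hb; simp [List.mem_replicate] at hb; omega
  | left _ b _ _ ih | right _ b _ _ ih => have := ih b (by simp); grind

lemma pos {d : ℕ} {l : List ℕ} (h : TString d l) : 0 < d := by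
  induction h with
  | base₁ => exact one_pos
  | base d hd => omega
  | left _ _ _ _ ih | right _ _ _ _ ih => exact ih

lemma exists_hjProd_eq_tMatrix {d : ℕ} {l : List ℕ} (h : TString d l) :
    ∃ n a : ℕ, 0 < a ∧ a < n ∧ Nat.Coprime a n ∧ hjProd l = tMatrix d n a := by
  induction h with
  | base₁ =>
    refine ⟨2, 1, one_pos, one_lt_two, rfl, ?_⟩
    ext i j; fin_cases i <;> fin_cases j <;> rfl
  | base d hd =>
    refine ⟨2, 1, one_pos, one_lt_two, rfl, ?_⟩
    obtain ⟨k, rfl⟩ := Nat.exists_eq_add_of_le' hd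
    rw [hjProd_cons, hjProd_append, hjProd_replicate, hjProd_singleton, Nat.add_sub_cancel]
    simp only [Nat.cast_ofNat, hjMatrix_two_pow]
    simp only [tMatrix, hjMatrix, Matrix.mul_fin_two]
    push_cast; ring_nf
  | left _ _ _ _ ih =>
    obtain ⟨n, a, ha, han, hcop, heq⟩ := ih
    refine ⟨n + a, a, ha, by omega, Nat.coprime_add_self_right.mpr hcop, ?_⟩
    rw [hjProd_left_move, heq, tMatrix_left_move]
    push_cast; rfl
  | right _ _ _ _ ih =>
    obtain ⟨n, a, ha, han, hcop, heq⟩ := ih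
    refine ⟨2 * n - a, n, by omega, by omega, ?_, ?_⟩
    · rw [show 2 * n - a = n + (n - a) by omega, Nat.coprime_self_add_right,
        Nat.coprime_self_sub_right han.le]
      exact hcop.symm
    · rw [hjProd_right_move, heq, tMatrix_right_move]
      push_cast [show a ≤ 2 * n by omega]
      rfl

end TString

/-- Every `T_d`-string evaluates to a fraction `dn²/(dna−1)` with `gcd(a,n) = 1`
and `0 < dna − 1 < dn²`. -/
theorem TString_eval (d : ℕ) (l : List ℕ) (h : TString d l) :
    ∃ n a : ℕ, 0 < n ∧ 0 < a ∧ Nat.gcd a n = 1 ∧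
      1 < d * n * a ∧ d * n * a - 1 < d * n ^ 2 ∧
      hj l = ((d : ℚ) * n ^ 2) / ((d : ℚ) * n * a - 1) := by
  obtain ⟨n, a, ha, han, hcop, heq⟩ := h.exists_hjProd_eq_tMatrix
  have hd := h.pos
  have hdn : 0 < d * n := Nat.mul_pos hd (by omega)
  have hlt : d * n * a < d * n ^ 2 := by
    rw [sq, ← mul_assoc]; exact Nat.mul_lt_mul_of_pos_left han hdn
  refine ⟨n, a, by omega, ha, hcop, by nlinarith, by omega, ?_⟩
  rw [hj_eq_hjProd_div h.two_le, heq]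
  simp [tMatrix]
end
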